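/- arXiv:1501.05890 — 6 statements merged into one kernel-verified Lean document; each statement's English description precedes it below -/
import Mathlib

section
/- Let L be a real symmetric n×n matrix and K a real n×n matrix whose null space is contained in the null space of L (i.e., every vector x with K.mulVec x = 0 satisfies L.mulVec x = 0). Then the null space of the product K·L equals the null space of L: for every x, (K * L).mulVec x = 0 if and only if L.mulVec x = 0. -/
open Matrix

namespace Matrix

variable {ι R : Type*} [Fintype ι]

theorem IsSymm.dotProduct_mulVec_mulVec_self [CommSemiring R] {A : Matrix ι ι R} (hA : A.IsSymm)
    (x : ι → R) : x ⬝ᵥ A *ᵥ (A *ᵥ x) = A *ᵥ x ⬝ᵥ A *ᵥ x := by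
  rw [dotProduct_mulVec, ← hA.eq, vecMul_transpose, hA.eq]

theorem IsSymm.mulVec_eq_zero_of_mulVec_mulVec_eq_zero [CommRing R] [LinearOrder R]
    [IsStrictOrderedRing R] {A : Matrix ι ι R} (hA : A.IsSymm) {x : ι → R}
    (hx : A *ᵥ (A *ᵥ x) = 0) : A *ᵥ x = 0 := by
  rw [← dotProduct_self_eq_zero, ← hA.dotProduct_mulVec_mulVec_self, hx, dotProduct_zero]

end Matrix

/-- Core linear-algebra step of Proposition 1: if `L` is real symmetric and the
null space of `K` is contained in the null space of `L`, then
`null(K * L) = null(L)`. -/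
theorem nullspace_mul_eq_of_nullspace_subset {n : ℕ}
    (L K : Matrix (Fin n) (Fin n) ℝ) (hL : L.IsSymm)
    (hKL : ∀ x : Fin n → ℝ, K.mulVec x = 0 → L.mulVec x = 0) :
    ∀ x : Fin n → ℝ, (K * L).mulVec x = 0 ↔ L.mulVec x = 0 := by
  intro x
  rw [← mulVec_mulVec]
  constructor
  · intro hKLx
    exact hL.mulVec_eq_zero_of_mulVec_mulVec_eq_zero (hKL _ hKLx)
  · intro hLx
    rw [hLx, mulVec_zero]
end

section
/- (Proposition 1, algebraic form.) Consider a microgrid with n buses, phase angles θ : Fin n → ℝ, voltage magnitudes E : Fin n → ℝ, admittance data Y φ : Fin n → Fin n → ℝ, and power injections P i = E i * ∑ j, Y i j * E j * Real.cos (θ i - θ j - φ i j) and Q i = E i * ∑ j, Y i j * E j * Real.sin (θ i - θ j - φ i j). Let ι : Fin m → Fin n enumerate the inverter buses, let P* Q* : Fin m → ℝ be nonzero nominal powers, and define the normalized injection vector S : (Fin m) × (Fin 2) → ℝ by S (i,0) = P (ι i) / P* i and S (i,1) = Q (ι i) / Q* i. Let L be a real symmetric positive semidefinite m×m matrix whose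 null space is exactly the constant vectors (the Laplacian of a connected communication graph), let L̄ = L ⊗ I₂, and let K be a real matrix indexed by (Fin m) × (Fin 2) whose null space is contained in span{v_p, v_q}. Then K.mulVec (L̄.mulVec S) = 0 if and only if active and reactive power are proportionally shared, i.e., P (ι j) / P* j = P (ι k) / P* k and Q (ι j) / Q* j = Q (ι k) / Q* k for all j, k : Fin m. -/
/-!
Write `x = L̄ S`; since `L̄ = L ⊗ I₂`, the column `x(·, c)` is `L` applied to the column `S(·, c)`.
If `K x = 0`, the hypothesis on `K` makes each column of `x` constant. Because `L` is symmetric and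
kills constants, `1ᵀ L y = (L 1)ᵀ y = 0` for every `y`, so a constant vector `a 1` in the range of
`L` has `m a = 0`, i.e. it is zero. Hence `L S(·, c) = 0`, and the null space of `L` forces each
column of `S` to be constant: this is proportional sharing. Conversely, constant columns of `S` are
killed by `L`, so `x = 0`.
-/

open Matrix Kronecker

namespace Matrix

variable {ι R : Type*} [Fintype ι]

theorem kronecker_one_mulVec_apply {m n κ : Type*} [Fintype n] [Fintype κ] [DecidableEq κ]
    [NonAssocSemiring R] (A : Matrix m n R) (x : n × κ → R) (i : m) (c : κ) :
    ((A ⊗ₖ (1 : Matrix κ κ R)) *ᵥ x) (i, c) = (A *ᵥ fun j => x (j, c)) i := by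
  simp only [mulVec, dotProduct, Fintype.sum_prod_type, kroneckerMap_apply, one_apply,
    mul_ite, mul_one, mul_zero, ite_mul, zero_mul, Finset.sum_ite_eq, Finset.mem_univ, if_true]

theorem IsSymm.sum_mulVec_eq_zero [CommSemiring R] {L : Matrix ι ι R} (hL : L.IsSymm)
    (hL1 : L *ᵥ 1 = 0) (y : ι → R) : ∑ i, (L *ᵥ y) i = 0 := by
  rw [← one_dotProduct, dotProduct_mulVec, ← hL, vecMul_transpose, hL1, zero_dotProduct]

theorem IsSymm.mulVec_eq_zero_of_forall_eq [Field R] [CharZero R] {L : Matrix ι ι R}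
    (hL : L.IsSymm) (hL1 : L *ᵥ 1 = 0) {y : ι → R} {a : R} (hy : ∀ i, (L *ᵥ y) i = a) :
    L *ᵥ y = 0 := by
  funext i
  have : Nonempty ι := ⟨i⟩
  have hsum : (Fintype.card ι : R) * a = 0 := by
    simpa [hy] using hL.sum_mulVec_eq_zero hL1 y
  rw [hy, Pi.zero_apply]
  exact (mul_eq_zero.1 hsum).resolve_left (Nat.cast_ne_zero.2 Fintype.card_ne_zero)

end Matrix

theorem equilibrium_iff_proportional_power_sharing_general
    {n m : ℕ}
    (P Q : Fin n → ℝ)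
    (ι : Fin m → Fin n)
    (Pstar Qstar : Fin m → ℝ)
    (S : (Fin m) × (Fin 2) → ℝ)
    (hS0 : ∀ i, S (i, 0) = P (ι i) / Pstar i)
    (hS1 : ∀ i, S (i, 1) = Q (ι i) / Qstar i)
    (L : Matrix (Fin m) (Fin m) ℝ) (hLsym : L.IsSymm)
    (hLnull : ∀ y : Fin m → ℝ, L.mulVec y = 0 ↔ ∃ c : ℝ, ∀ i, y i = c)
    (K : Matrix ((Fin m) × (Fin 2)) ((Fin m) × (Fin 2)) ℝ)
    (hK : ∀ x : (Fin m) × (Fin 2) → ℝ, K.mulVec x = 0 →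
      ∃ a b : ℝ, ∀ i : Fin m, x (i, 0) = a ∧ x (i, 1) = b) :
    K.mulVec ((L ⊗ₖ (1 : Matrix (Fin 2) (Fin 2) ℝ)).mulVec S) = 0 ↔
      ∀ j k : Fin m,
        P (ι j) / Pstar j = P (ι k) / Pstar k ∧
        Q (ι j) / Qstar j = Q (ι k) / Qstar k := by
  have hL1 : L *ᵥ 1 = 0 := (hLnull 1).2 ⟨1, fun _ => rfl⟩
  constructor
  · intro hKx j k
    obtain ⟨a, b, hab⟩ := hK _ hKx
    have column_const : ∀ c a, (∀ i, ((L ⊗ₖ 1) *ᵥ S) (i, c) = a) → S (j, c) = S (k, c) := by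
      intro c a hc
      simp only [kronecker_one_mulVec_apply] at hc
      obtain ⟨d, hd⟩ := (hLnull _).1 (hLsym.mulVec_eq_zero_of_forall_eq hL1 hc)
      rw [hd j, hd k]
    rw [← hS0, ← hS0, ← hS1, ← hS1]
    exact ⟨column_const 0 a fun i => (hab i).1, column_const 1 b fun i => (hab i).2⟩
  · intro hshare
    suffices (L ⊗ₖ 1) *ᵥ S = 0 by rw [this, mulVec_zero]
    funext ⟨i, c⟩
    have hSc : ∀ j, S (j, c) = S (i, c) := by
      fin_cases c
      · simp [hS0, (hshare _ i).1]
      · simp [hS1, (hshare _ i).2]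
    rw [kronecker_one_mulVec_apply, (hLnull _).2 ⟨_, hSc⟩, Pi.zero_apply, Pi.zero_apply]

/-- Proposition 1 (algebraic form): with the control matrix `K` whose null space is
contained in the power-sharing subspace `span{v_p, v_q}`, and `L` the Laplacian of a
connected communication graph (symmetric positive semidefinite with null space the
constants), the steady-state condition `K (L̄ S) = 0` is equivalent to proportional
sharing of both active and reactive power. -/
theorem equilibrium_iff_proportional_power_sharing
    {n m : ℕ} (Y φ : Fin n → Fin n → ℝ) (θ E : Fin n → ℝ)
    (P Q : Fin n → ℝ)
    (hP : ∀ i, P i = E i * ∑ j, Y i j * E j * Real.cos (θ i - θ j - φ i j))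
    (hQ : ∀ i, Q i = E i * ∑ j, Y i j * E j * Real.sin (θ i - θ j - φ i j))
    (ι : Fin m → Fin n) (hι : Function.Injective ι)
    (Pstar Qstar : Fin m → ℝ)
    (hPstar : ∀ i, Pstar i ≠ 0) (hQstar : ∀ i, Qstar i ≠ 0)
    (S : (Fin m) × (Fin 2) → ℝ)
    (hS0 : ∀ i, S (i, 0) = P (ι i) / Pstar i)
    (hS1 : ∀ i, S (i, 1) = Q (ι i) / Qstar i)
    (L : Matrix (Fin m) (Fin m) ℝ) (hLsym : L.IsSymm) (hLpsd : L.PosSemidef)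
    (hLnull : ∀ y : Fin m → ℝ, L.mulVec y = 0 ↔ ∃ c : ℝ, ∀ i, y i = c)
    (K : Matrix ((Fin m) × (Fin 2)) ((Fin m) × (Fin 2)) ℝ)
    (hK : ∀ x : (Fin m) × (Fin 2) → ℝ, K.mulVec x = 0 →
      ∃ a b : ℝ, ∀ i : Fin m, x (i, 0) = a ∧ x (i, 1) = b) :
    K.mulVec ((L ⊗ₖ (1 : Matrix (Fin 2) (Fin 2) ℝ)).mulVec S) = 0 ↔
      ∀ j k : Fin m,
        P (ι j) / Pstar j = P (ι k) / Pstar k ∧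
        Q (ι j) / Qstar j = Q (ι k) / Qstar k :=
  equilibrium_iff_proportional_power_sharing_general P Q ι Pstar Qstar S hS0 hS1 L hLsym hLnull K hK
end

section
/- (Proposition 2.) Let m ≥ 1, let ζ, ε, ξ be positive reals, let U be a real symmetric positive definite m×m matrix, and let 𝒜 be a set of real m×m matrices such that for every A ∈ 𝒜 the symmetric 2m×2m block matrix fromBlocks (Aᵀ·U + U·A + ε·ζ·I + ξ·U) U U (−ε·I) is negative semidefinite. Let z, w : ℝ → (Fin m → ℝ) and A : ℝ → Matrix (Fin m) (Fin m) ℝ be such that for every t ≥ 0: A t ∈ 𝒜, z has derivative (A t).mulVec (z t) + w t at t, and ‖w t‖² ≤ ζ · ‖z t‖² (Euclidean norms). Then for every t ≥ 0, (z t) ⬝ᵥ (U.mulVec (z t)) ≤ Real.exp (−ξ·t) · ((z 0) ⬝ᵥ (U.mulVec (z 0))); in particular z(t) converges to 0 exponentially. -/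
/-!
Testing the LMI on the stacked vector `(z, w)` (an S-procedure) bounds the derivative of
`V(z) = zᵀ U z` along the system by `-ξ V + ε (‖w‖² - ζ ‖z‖²)`, and the sector bound on `w` makes
the bracket nonpositive. Hence `V' ≤ -ξ V`, so `e^{ξ t} V(z t)` is nonincreasing on `[0, ∞)`.
-/

open Matrix

theorem HasDerivAt.dotProduct_mulVec {n : Type*} [Fintype n] (U : Matrix n n ℝ)
    {z : ℝ → n → ℝ} {z' : n → ℝ} {t : ℝ} (hz : HasDerivAt z z' t) :
    HasDerivAt (fun s => z s ⬝ᵥ U *ᵥ z s) (z' ⬝ᵥ U *ᵥ z t + z t ⬝ᵥ U *ᵥ z') t := by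
  have hUz : HasDerivAt (fun s => U *ᵥ z s) (U *ᵥ z') t :=
    (LinearMap.toContinuousLinearMap (mulVecLin U)).hasFDerivAt.comp_hasDerivAt t hz
  have := HasDerivAt.fun_sum (u := Finset.univ) fun i _ =>
    (hasDerivAt_pi.mp hz i).fun_mul (hasDerivAt_pi.mp hUz i)
  simpa only [dotProduct, Finset.sum_add_distrib] using this

theorem quadForm_fromBlocks_nonpos {n o : Type*} [Fintype n] [Fintype o]
    {P : Matrix n n ℝ} {Q : Matrix n o ℝ} {R : Matrix o n ℝ} {S : Matrix o o ℝ}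
    (h : (-fromBlocks P Q R S).PosSemidef) (x : n → ℝ) (y : o → ℝ) :
    x ⬝ᵥ P *ᵥ x + x ⬝ᵥ Q *ᵥ y + (y ⬝ᵥ R *ᵥ x + y ⬝ᵥ S *ᵥ y) ≤ 0 := by
  have := h.dotProduct_mulVec_nonneg (Sum.elim x y)
  rwa [star_trivial, neg_mulVec, dotProduct_neg, neg_nonneg, fromBlocks_mulVec,
    sumElim_dotProduct_sumElim, dotProduct_add, dotProduct_add] at this

theorem lyapunov_deriv_le_of_lmi {n : Type*} [Fintype n] [DecidableEq n] {A U : Matrix n n ℝ}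
    {ζ ε ξ : ℝ}
    (h : (-(fromBlocks (Aᵀ * U + U * A + (ε * ζ) • (1 : Matrix n n ℝ) + ξ • U)
          U U (-(ε • (1 : Matrix n n ℝ))))).PosSemidef) (x y : n → ℝ) :
    (A *ᵥ x + y) ⬝ᵥ U *ᵥ x + x ⬝ᵥ U *ᵥ (A *ᵥ x + y)
      ≤ -ξ * (x ⬝ᵥ U *ᵥ x) + ε * (y ⬝ᵥ y - ζ * (x ⬝ᵥ x)) := by
  have hlmi := quadForm_fromBlocks_nonpos h x y
  have hAU : (A *ᵥ x) ⬝ᵥ U *ᵥ x = x ⬝ᵥ (Aᵀ * U) *ᵥ x := by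
    rw [dotProduct_mulVec, dotProduct_mulVec, vecMul_mulVec]
  have hUA : x ⬝ᵥ U *ᵥ (A *ᵥ x) = x ⬝ᵥ (U * A) *ᵥ x := by rw [mulVec_mulVec]
  simp only [add_mulVec, smul_mulVec, one_mulVec, neg_mulVec, mulVec_add, dotProduct_add,
    add_dotProduct, dotProduct_smul, dotProduct_neg, smul_eq_mul, hAU, hUA] at hlmi ⊢
  linarith [dotProduct_comm y (U *ᵥ x)]

theorem le_exp_mul_of_hasDerivAt_le_mul {f f' : ℝ → ℝ} {K : ℝ}
    (hf : ∀ t, 0 ≤ t → HasDerivAt f (f' t) t) (hbound : ∀ t, 0 ≤ t → f' t ≤ K * f t)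
    {t : ℝ} (ht : 0 ≤ t) : f t ≤ Real.exp (K * t) * f 0 := by
  let g : ℝ → ℝ := fun s => Real.exp (-K * s) * f s
  have hg : ∀ s, 0 ≤ s → HasDerivAt g (Real.exp (-K * s) * (f' s - K * f s)) s := fun s hs =>
    (((hasDerivAt_id' s).const_mul (-K)).exp.fun_mul (hf s hs)).congr_deriv (by ring)
  have hanti : AntitoneOn g (Set.Ici 0) := by
    refine antitoneOn_of_hasDerivWithinAt_nonpos
      (f' := fun s => Real.exp (-K * s) * (f' s - K * f s)) (convex_Ici 0)
      (fun s hs => (hg s hs).continuousAt.continuousWithinAt) (fun s hs => ?_) fun s hs => ?_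
    · rw [interior_Ici] at hs
      exact (hg s (le_of_lt hs)).hasDerivWithinAt
    · rw [interior_Ici] at hs
      exact mul_nonpos_of_nonneg_of_nonpos (Real.exp_pos _).le
        (sub_nonpos.mpr (hbound s (le_of_lt hs)))
  have hgt : g t ≤ g 0 := hanti Set.self_mem_Ici ht ht
  simpa only [g, neg_mul, Real.exp_neg, mul_zero, Real.exp_zero, inv_one, one_mul,
    inv_mul_le_iff₀ (Real.exp_pos _)] using hgt

theorem robust_stability_LTV_general
    {m : ℕ} (ζ ε ξ : ℝ) (hε : 0 < ε)
    (U : Matrix (Fin m) (Fin m) ℝ)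
    (𝒜 : Set (Matrix (Fin m) (Fin m) ℝ))
    (h𝒜 : ∀ A ∈ 𝒜,
      (-(Matrix.fromBlocks
          (Aᵀ * U + U * A + (ε * ζ) • (1 : Matrix (Fin m) (Fin m) ℝ) + ξ • U)
          U U (-(ε • (1 : Matrix (Fin m) (Fin m) ℝ))))).PosSemidef)
    (z w : ℝ → (Fin m → ℝ)) (A : ℝ → Matrix (Fin m) (Fin m) ℝ)
    (hA : ∀ t, 0 ≤ t → A t ∈ 𝒜)
    (hz : ∀ t, 0 ≤ t → HasDerivAt z ((A t).mulVec (z t) + w t) t)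
    (hw : ∀ t, 0 ≤ t → ∑ i, (w t i) ^ 2 ≤ ζ * ∑ i, (z t i) ^ 2) :
    ∀ t, 0 ≤ t →
      z t ⬝ᵥ U.mulVec (z t) ≤ Real.exp (-ξ * t) * (z 0 ⬝ᵥ U.mulVec (z 0)) := by
  intro t ht
  have hdecay : ∀ s, 0 ≤ s → (A s *ᵥ z s + w s) ⬝ᵥ U *ᵥ z s + z s ⬝ᵥ U *ᵥ (A s *ᵥ z s + w s)
      ≤ -ξ * (z s ⬝ᵥ U *ᵥ z s) := by
    intro s hs
    have hws : w s ⬝ᵥ w s ≤ ζ * (z s ⬝ᵥ z s) := by simpa only [dotProduct, sq] using hw s hs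
    have hlmi := lyapunov_deriv_le_of_lmi (h𝒜 _ (hA s hs)) (z s) (w s)
    linarith [mul_nonpos_of_nonneg_of_nonpos hε.le (sub_nonpos.2 hws)]
  exact le_exp_mul_of_hasDerivAt_le_mul (fun s hs => (hz s hs).dotProduct_mulVec U) hdecay ht

/-- Proposition 2 (robust stability): if the LMI
`fromBlocks (AᵀU + UA + εζI + ξU) U U (−εI) ⪯ 0` holds for every `A ∈ 𝒜`, then along
any trajectory of `ż = A(t) z + w(t)` with `A(t) ∈ 𝒜` and `‖w(t)‖² ≤ ζ‖z(t)‖²`, the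
Lyapunov function `V(z) = zᵀ U z` decays exponentially with rate `ξ`. -/
theorem robust_stability_LTV
    {m : ℕ} (hm : 1 ≤ m) (ζ ε ξ : ℝ) (hζ : 0 < ζ) (hε : 0 < ε) (hξ : 0 < ξ)
    (U : Matrix (Fin m) (Fin m) ℝ) (hUsym : U.IsSymm) (hU : U.PosDef)
    (𝒜 : Set (Matrix (Fin m) (Fin m) ℝ))
    (h𝒜 : ∀ A ∈ 𝒜,
      (-(Matrix.fromBlocks
          (Aᵀ * U + U * A + (ε * ζ) • (1 : Matrix (Fin m) (Fin m) ℝ) + ξ • U)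
          U U (-(ε • (1 : Matrix (Fin m) (Fin m) ℝ))))).PosSemidef)
    (z w : ℝ → (Fin m → ℝ)) (A : ℝ → Matrix (Fin m) (Fin m) ℝ)
    (hA : ∀ t, 0 ≤ t → A t ∈ 𝒜)
    (hz : ∀ t, 0 ≤ t → HasDerivAt z ((A t).mulVec (z t) + w t) t)
    (hw : ∀ t, 0 ≤ t → ∑ i, (w t i) ^ 2 ≤ ζ * ∑ i, (z t i) ^ 2) :
    ∀ t, 0 ≤ t →
      z t ⬝ᵥ U.mulVec (z t) ≤ Real.exp (-ξ * t) * (z 0 ⬝ᵥ U.mulVec (z 0)) :=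
  robust_stability_LTV_general ζ ε ξ hε U 𝒜 h𝒜 z w A hA hz hw
end

section
/- Let U be a real symmetric positive definite m×m matrix, A a real m×m matrix, and ε, ξ, ζ positive reals. If the symmetric 2m×2m block matrix fromBlocks (Aᵀ·U + U·A + ε·ζ·I + ξ·U) U U (−ε·I) is negative semidefinite, then for all vectors z, w : Fin m → ℝ with ‖w‖² ≤ ζ·‖z‖² (Euclidean norms), one has z ⬝ᵥ ((Aᵀ·U + U·A).mulVec z) + 2 · (z ⬝ᵥ (U.mulVec w)) ≤ −ξ · (z ⬝ᵥ (U.mulVec z)). -/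
/-!
Evaluating the negative semidefinite block form at `(z, w)` gives
`zᵀ(AᵀU + UA + εζI + ξU)z + 2 zᵀUw ≤ ε‖w‖²`, and the bound `ε‖w‖² ≤ εζ‖z‖²` cancels the
`εζ‖z‖²` term on the left.
-/

open Matrix

namespace Matrix

variable {ι κ R : Type*} [Fintype ι] [Fintype κ] [CommRing R]

theorem sumElim_dotProduct_fromBlocks_mulVec_sumElim (A : Matrix ι ι R) (B : Matrix ι κ R)
    (C : Matrix κ ι R) (D : Matrix κ κ R) (x : ι → R) (y : κ → R) :
    Sum.elim x y ⬝ᵥ fromBlocks A B C D *ᵥ Sum.elim x y =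
      x ⬝ᵥ A *ᵥ x + x ⬝ᵥ B *ᵥ y + (y ⬝ᵥ C *ᵥ x + y ⬝ᵥ D *ᵥ y) := by
  simp only [fromBlocks_mulVec, sumElim_dotProduct_sumElim, Sum.elim_comp_inl, Sum.elim_comp_inr,
    dotProduct_add]

theorem IsSymm.dotProduct_mulVec_comm {U : Matrix ι ι R} (hU : U.IsSymm) (x y : ι → R) :
    y ⬝ᵥ U *ᵥ x = x ⬝ᵥ U *ᵥ y := by
  rw [dotProduct_mulVec, ← mulVec_transpose, hU, dotProduct_comm]

theorem dotProduct_self_eq_sum_sq (x : ι → R) : x ⬝ᵥ x = ∑ i, x i ^ 2 := by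
  simp only [dotProduct, sq]

theorem dotProduct_mulVec_add_two_mul_le_of_posSemidef_neg_fromBlocks {X U D : Matrix ι ι ℝ}
    (hU : U.IsSymm) (h : (-fromBlocks X U U (-D)).PosSemidef) (z w : ι → ℝ) :
    z ⬝ᵥ X *ᵥ z + 2 * (z ⬝ᵥ U *ᵥ w) ≤ w ⬝ᵥ D *ᵥ w := by
  have hform := h.dotProduct_mulVec_nonneg (Sum.elim z w)
  rw [star_trivial, neg_mulVec, dotProduct_neg, sumElim_dotProduct_fromBlocks_mulVec_sumElim,
    hU.dotProduct_mulVec_comm z w, neg_mulVec, dotProduct_neg] at hform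
  linarith

end Matrix

theorem lyapunov_decrease_of_LMI_general
    {m : ℕ} (U A : Matrix (Fin m) (Fin m) ℝ) (hUsym : U.IsSymm)
    (ε ξ ζ : ℝ) (hε : 0 < ε)
    (hLMI : (-(Matrix.fromBlocks
        (Aᵀ * U + U * A + (ε * ζ) • (1 : Matrix (Fin m) (Fin m) ℝ) + ξ • U)
        U U (-(ε • (1 : Matrix (Fin m) (Fin m) ℝ))))).PosSemidef) :
    ∀ z w : Fin m → ℝ, ∑ i, (w i) ^ 2 ≤ ζ * ∑ i, (z i) ^ 2 →
      z ⬝ᵥ ((Aᵀ * U + U * A).mulVec z) + 2 * (z ⬝ᵥ U.mulVec w) ≤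
        -ξ * (z ⬝ᵥ U.mulVec z) := by
  intro z w hw
  have hform := dotProduct_mulVec_add_two_mul_le_of_posSemidef_neg_fromBlocks hUsym hLMI z w
  simp only [add_mulVec, smul_mulVec, one_mulVec,
    dotProduct_add, dotProduct_smul, smul_eq_mul, dotProduct_self_eq_sum_sq] at hform ⊢
  linarith [mul_le_mul_of_nonneg_left hw hε.le]

/-- Pointwise Lyapunov-decrease step in Proposition 2: negative semidefiniteness of the
block matrix `fromBlocks (AᵀU + UA + εζI + ξU) U U (−εI)` implies that for all `z, w`
with `‖w‖² ≤ ζ‖z‖²`, the Lyapunov derivative `zᵀ(AᵀU+UA)z + 2 zᵀUw` is at most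
`−ξ zᵀUz`. -/
theorem lyapunov_decrease_of_LMI
    {m : ℕ} (U A : Matrix (Fin m) (Fin m) ℝ) (hUsym : U.IsSymm) (hU : U.PosDef)
    (ε ξ ζ : ℝ) (hε : 0 < ε) (hξ : 0 < ξ) (hζ : 0 < ζ)
    (hLMI : (-(Matrix.fromBlocks
        (Aᵀ * U + U * A + (ε * ζ) • (1 : Matrix (Fin m) (Fin m) ℝ) + ξ • U)
        U U (-(ε • (1 : Matrix (Fin m) (Fin m) ℝ))))).PosSemidef) :
    ∀ z w : Fin m → ℝ, ∑ i, (w i) ^ 2 ≤ ζ * ∑ i, (z i) ^ 2 →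
      z ⬝ᵥ ((Aᵀ * U + U * A).mulVec z) + 2 * (z ⬝ᵥ U.mulVec w) ≤
        -ξ * (z ⬝ᵥ U.mulVec z) :=
  lyapunov_decrease_of_LMI_general U A hUsym ε ξ ζ hε hLMI
end

section
/- (S-lemma / S-procedure.) Let M and N be real symmetric n×n matrices, and suppose there exists a vector v₀ : Fin n → ℝ with v₀ ⬝ᵥ (N.mulVec v₀) < 0 (Slater condition). Then the following are equivalent: (i) for every v : Fin n → ℝ, v ⬝ᵥ (N.mulVec v) ≤ 0 implies v ⬝ᵥ (M.mulVec v) ≤ 0; (ii) there exists ε ≥ 0 such that M − ε·N is negative semidefinite, i.e., v ⬝ᵥ (M.mulVec v) ≤ ε · (v ⬝ᵥ (N.mulVec v)) for all v. -/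
/-!
Restricted to the plane spanned by `u` with `G u < 0` and `v` with `G v > 0`, the hypothesis
becomes one about binary quadratic forms; evaluating at the two isotropic lines of `G` there
shows `F v / G v ≤ F u / G u`. Hence `ε = inf {F u / G u | G u < 0}`, which is nonnegative and
finite thanks to the Slater point, satisfies `F ≤ ε G` on both sides of `G = 0`.
-/

open Matrix

lemma cross_le_of_binary_quadratic_nonpos_imp {p q r a b c : ℝ} (hp : p < 0) (hr : 0 < r)
    (h : ∀ α β : ℝ, α ^ 2 * p + α * β * q + β ^ 2 * r ≤ 0 →
      α ^ 2 * a + α * β * b + β ^ 2 * c ≤ 0) :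
    a * r ≤ c * p := by
  -- The first form vanishes at `(2r, -q ∓ s)` with `s = √(q² - 4pr)`; weighting the values of
  -- the second form there by `s ∓ q ≥ 0` and adding gives `8 r s (a r - c p)`.
  set s := √(q ^ 2 - 4 * p * r)
  have hs_sq : s ^ 2 = q ^ 2 - 4 * p * r := Real.sq_sqrt (by nlinarith)
  have hs_pos : 0 < s := Real.sqrt_pos.2 (by nlinarith)
  have hq_lt : |q| < s := abs_lt_of_sq_lt_sq (by nlinarith) hs_pos.le
  have hminus := h (2 * r) (-q - s) (le_of_eq (by linear_combination r * hs_sq))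
  have hplus := h (2 * r) (-q + s) (le_of_eq (by linear_combination r * hs_sq))
  have hcomb : 8 * r * s * (a * r - c * p) ≤ 0 := by
    have := add_nonpos
      (mul_nonpos_of_nonneg_of_nonpos (by linarith [le_abs_self q] : 0 ≤ s - q) hminus)
      (mul_nonpos_of_nonneg_of_nonpos (by linarith [neg_abs_le q] : 0 ≤ s + q) hplus)
    linear_combination this - (2 * s * c) * hs_sq
  nlinarith [mul_pos hr hs_pos]

namespace QuadraticMap

variable {R M N : Type*} [CommRing R] [AddCommGroup M] [Module R M] [AddCommGroup N] [Module R N]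

lemma map_smul_add_smul (Q : QuadraticMap R M N) (u v : M) (α β : R) :
    Q (α • u + β • v) = α ^ 2 • Q u + (α * β) • polar Q u v + β ^ 2 • Q v := by
  rw [QuadraticMap.map_add Q, polar_smul_left, polar_smul_right, QuadraticMap.map_smul,
    QuadraticMap.map_smul, smul_smul, pow_two, pow_two]
  abel

section Real

variable {V : Type*} [AddCommGroup V] [Module ℝ V] {F G : QuadraticMap ℝ V ℝ}

lemma mul_le_mul_of_nonpos_imp_nonpos (h : ∀ v, G v ≤ 0 → F v ≤ 0) {u v : V}
    (hu : G u < 0) (hv : 0 < G v) :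
    F u * G v ≤ F v * G u := by
  refine cross_le_of_binary_quadratic_nonpos_imp (q := polar G u v) (b := polar F u v) hu hv
    fun α β hG => ?_
  have hFG := h (α • u + β • v)
  simp only [map_smul_add_smul, smul_eq_mul] at hFG
  exact hFG hG

theorem exists_le_mul_of_nonpos_imp_nonpos (hG : ∃ u, G u < 0) (h : ∀ v, G v ≤ 0 → F v ≤ 0) :
    ∃ ε ≥ (0 : ℝ), ∀ v, F v ≤ ε * G v := by
  obtain ⟨u₀, hu₀⟩ := hG
  set S := (fun u => F u / G u) '' {u | G u < 0}
  have hS_nonneg : ∀ x ∈ S, 0 ≤ x := by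
    rintro _ ⟨u, hu, rfl⟩
    exact div_nonneg_of_nonpos (h u hu.le) hu.le
  have hS_ne : S.Nonempty := ⟨_, u₀, hu₀, rfl⟩
  refine ⟨sInf S, le_csInf hS_ne hS_nonneg, fun v => ?_⟩
  rcases lt_trichotomy (G v) 0 with hv | hv | hv
  · exact (le_div_iff_of_neg hv).mp (csInf_le ⟨0, hS_nonneg⟩ ⟨v, hv, rfl⟩)
  · simpa [hv] using h v hv.le
  · rw [← div_le_iff₀ hv]
    refine le_csInf hS_ne ?_
    rintro _ ⟨u, hu, rfl⟩
    rw [div_le_iff₀ hv, div_mul_eq_mul_div, le_div_iff_of_neg hu]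
    exact mul_le_mul_of_nonpos_imp_nonpos h hu hv

theorem nonpos_imp_nonpos_iff_exists_le_mul (hG : ∃ u, G u < 0) :
    (∀ v, G v ≤ 0 → F v ≤ 0) ↔ ∃ ε ≥ (0 : ℝ), ∀ v, F v ≤ ε * G v :=
  ⟨exists_le_mul_of_nonpos_imp_nonpos hG, fun ⟨_, hε, hle⟩ v hv =>
    (hle v).trans (mul_nonpos_of_nonneg_of_nonpos hε hv)⟩

end Real

end QuadraticMap

lemma Matrix.toQuadraticForm'_apply {ι R : Type*} [Fintype ι] [DecidableEq ι] [CommRing R]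
    (A : Matrix ι ι R) (v : ι → R) :
    A.toQuadraticForm' v = v ⬝ᵥ A *ᵥ v :=
  toLinearMap₂'_apply' A v v

theorem s_lemma_general
    {n : ℕ} (M N : Matrix (Fin n) (Fin n) ℝ)
    (v₀ : Fin n → ℝ) (hv₀ : v₀ ⬝ᵥ N.mulVec v₀ < 0) :
    (∀ v : Fin n → ℝ, v ⬝ᵥ N.mulVec v ≤ 0 → v ⬝ᵥ M.mulVec v ≤ 0) ↔
      ∃ ε ≥ (0 : ℝ), ∀ v : Fin n → ℝ,
        v ⬝ᵥ M.mulVec v ≤ ε * (v ⬝ᵥ N.mulVec v) := by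
  simp only [← Matrix.toQuadraticForm'_apply] at hv₀ ⊢
  exact QuadraticMap.nonpos_imp_nonpos_iff_exists_le_mul ⟨v₀, hv₀⟩

/-- The S-lemma (lossless S-procedure for one quadratic constraint): given real
symmetric matrices `M, N` and a Slater point `v₀` with `v₀ᵀ N v₀ < 0`, the implication
`vᵀ N v ≤ 0 → vᵀ M v ≤ 0` holds for all `v` iff there exists `ε ≥ 0` such that
`M − εN` is negative semidefinite, i.e. `vᵀ M v ≤ ε (vᵀ N v)` for all `v`. -/
theorem s_lemma
    {n : ℕ} (M N : Matrix (Fin n) (Fin n) ℝ) (hM : M.IsSymm) (hN : N.IsSymm)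
    (v₀ : Fin n → ℝ) (hv₀ : v₀ ⬝ᵥ N.mulVec v₀ < 0) :
    (∀ v : Fin n → ℝ, v ⬝ᵥ N.mulVec v ≤ 0 → v ⬝ᵥ M.mulVec v ≤ 0) ↔
      ∃ ε ≥ (0 : ℝ), ∀ v : Fin n → ℝ,
        v ⬝ᵥ M.mulVec v ≤ ε * (v ⬝ᵥ N.mulVec v) :=
  s_lemma_general M N v₀ hv₀
end

section
/- (Feasibility of the BMI constraints, corrected core of Lemma 4.) Let U be a real symmetric positive definite m×m matrix with largest eigenvalue Λ, let ζ > 0, and let A₁, …, A_l be real m×m matrices such that for each i, Aᵢᵀ·U + U·Aᵢ + d·I is negative semidefinite for some constant d > 2·Λ·Real.sqrt ζ. Then there exist ε > 0 and ξ > 0 such that for every i ∈ [l], the block matrix fromBlocks (Aᵢᵀ·U + U·Aᵢ + ε·ζ·I + ξ·U) U U (−ε·I) is negative semidefinite. -/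
/-!
Take `ε = Λ / √ζ` and `ξ = (d - 2Λ√ζ) / Λ`. By the Schur complement with respect to the
block `-εI`, the block matrix is negative semidefinite once
`-(AᵢᵀU + UAᵢ + dI) + p(U)` is positive semidefinite, where
`p(μ) = (d - εζ) - ξμ - ε⁻¹μ² = (Λ - μ)(d - Λ√ζ + √ζμ) / Λ`.
Since `p ≥ 0` on `[0, Λ] ⊇ spectrum U`, the functional calculus makes `p(U)` positive semidefinite.
-/

open Matrix Polynomial
open scoped MatrixOrder ComplexOrder

theorem Matrix.IsHermitian.posSemidef_smul_one_add_smul_add_smul_mul_self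
    {n 𝕜 : Type*} [Fintype n] [DecidableEq n] [RCLike 𝕜] {U : Matrix n n 𝕜}
    (hU : U.IsHermitian) (a b c : ℝ)
    (h : ∀ i, 0 ≤ a + b * hU.eigenvalues i + c * hU.eigenvalues i ^ 2) :
    (a • (1 : Matrix n n 𝕜) + b • U + c • (U * U)).PosSemidef := by
  have hcfc := cfc_polynomial (R := ℝ) (C a + C b * X + C c * X ^ 2 : ℝ[X]) U hU
  rw [map_add, map_add, aeval_C, map_mul, map_mul, aeval_C, aeval_C, aeval_X, map_pow, aeval_X]
    at hcfc
  simp only [Algebra.algebraMap_eq_smul_one, smul_mul_assoc, one_mul, sq] at hcfc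
  rw [← hcfc, ← nonneg_iff_posSemidef]
  refine cfc_nonneg fun x hx => ?_
  obtain ⟨i, rfl⟩ := hU.spectrum_real_eq_range_eigenvalues ▸ hx
  simpa [sq] using h i

theorem Matrix.posSemidef_neg_fromBlocks_neg_smul_one_iff
    {m n K : Type*} [Fintype m] [Fintype n] [DecidableEq n]
    [Field K] [PartialOrder K] [StarRing K] [StarOrderedRing K]
    (A : Matrix m m K) (B : Matrix m n K) {ε : K} (hε : 0 < ε) :
    (-(fromBlocks A B Bᴴ (-(ε • 1)))).PosSemidef ↔ (-(A + ε⁻¹ • (B * Bᴴ))).PosSemidef := by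
  have hD : (ε • 1 : Matrix n n K).PosDef := PosDef.one.smul hε
  have hinv : (ε • 1 : Matrix n n K)⁻¹ = ε⁻¹ • 1 :=
    inv_eq_left_inv (by rw [smul_mul_smul_comm, one_mul, inv_mul_cancel₀ hε.ne', one_smul])
  have := hD.isUnit.invertible
  rw [fromBlocks_neg, neg_neg, ← conjTranspose_neg, PosDef.fromBlocks₂₂ _ _ hD, hinv]
  simp [sub_eq_add_neg, add_comm]

theorem sub_sub_div_mul_sub_div_mul_sq_nonneg {Λ s d μ : ℝ} (hΛ : 0 < Λ) (hs : 0 ≤ s)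
    (hμ : 0 ≤ μ) (hμΛ : μ ≤ Λ) (hd : 2 * Λ * s < d) :
    0 ≤ d - Λ * s - (d - 2 * Λ * s) / Λ * μ - s / Λ * μ ^ 2 := by
  have hfactor : d - Λ * s - (d - 2 * Λ * s) / Λ * μ - s / Λ * μ ^ 2
      = (Λ - μ) * (d - Λ * s + s * μ) / Λ := by
    field_simp
    ring
  have hΛs : 0 ≤ Λ * s := by positivity
  have hsμ : 0 ≤ s * μ := by positivity
  rw [hfactor]
  exact div_nonneg (mul_nonneg (by linarith) (by linarith)) hΛ.le

theorem BMI_feasibility_general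
    {m l : ℕ}
    (U : Matrix (Fin m) (Fin m) ℝ) (hU : U.PosDef)
    (Λ : ℝ) (hΛ : IsGreatest (Set.range hU.1.eigenvalues) Λ)
    (ζ : ℝ) (hζ : 0 < ζ)
    (A : Fin l → Matrix (Fin m) (Fin m) ℝ)
    (d : ℝ) (hd : 2 * Λ * Real.sqrt ζ < d)
    (hA : ∀ i, (-((A i)ᵀ * U + U * (A i) +
        d • (1 : Matrix (Fin m) (Fin m) ℝ))).PosSemidef) :
    ∃ ε > (0 : ℝ), ∃ ξ > (0 : ℝ), ∀ i,
      (-(Matrix.fromBlocks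
          ((A i)ᵀ * U + U * (A i) + (ε * ζ) • (1 : Matrix (Fin m) (Fin m) ℝ) + ξ • U)
          U U (-(ε • (1 : Matrix (Fin m) (Fin m) ℝ))))).PosSemidef := by
  obtain ⟨j, hj⟩ := hΛ.1
  have hΛpos : 0 < Λ := hj ▸ hU.eigenvalues_pos j
  set s := Real.sqrt ζ
  have hs : 0 < s := Real.sqrt_pos.mpr hζ
  have hε : 0 < Λ / s := div_pos hΛpos hs
  have hεζ : Λ / s * ζ = Λ * s := by
    rw [div_mul_eq_mul_div, mul_div_assoc, Real.div_sqrt]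
  refine ⟨Λ / s, hε, (d - 2 * Λ * s) / Λ, div_pos (by linarith) hΛpos, fun i => ?_⟩
  have hp := hU.1.posSemidef_smul_one_add_smul_add_smul_mul_self
    (d - Λ * s) (-((d - 2 * Λ * s) / Λ)) (-(s / Λ)) fun k => by
      have := sub_sub_div_mul_sub_div_mul_sq_nonneg hΛpos hs.le (hU.eigenvalues_pos k).le
        (hΛ.2 ⟨k, rfl⟩) hd
      linarith
  conv => enter [1, 1, 3]; rw [← hU.1.eq]
  rw [posSemidef_neg_fromBlocks_neg_smul_one_iff _ _ hε, hU.1.eq]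
  refine Eq.subst (motive := fun M : Matrix (Fin m) (Fin m) ℝ => M.PosSemidef) ?_
    ((hA i).add hp)
  rw [hεζ, inv_div]
  module

/-- Feasibility of the BMI constraints (corrected core of Lemma 4): if each
`AᵢᵀU + UAᵢ + dI` is negative semidefinite with `d > 2Λ√ζ`, where `Λ` is the largest
eigenvalue of the symmetric positive definite matrix `U`, then there exist `ε > 0` and
`ξ > 0` making all the block matrices
`fromBlocks (AᵢᵀU + UAᵢ + εζI + ξU) U U (−εI)` negative semidefinite. -/
theorem BMI_feasibility
    {m l : ℕ} (hm : 1 ≤ m)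
    (U : Matrix (Fin m) (Fin m) ℝ) (hUsym : U.IsSymm) (hU : U.PosDef)
    (Λ : ℝ) (hΛ : IsGreatest (Set.range hU.1.eigenvalues) Λ)
    (ζ : ℝ) (hζ : 0 < ζ)
    (A : Fin l → Matrix (Fin m) (Fin m) ℝ)
    (d : ℝ) (hd : 2 * Λ * Real.sqrt ζ < d)
    (hA : ∀ i, (-((A i)ᵀ * U + U * (A i) +
        d • (1 : Matrix (Fin m) (Fin m) ℝ))).PosSemidef) :
    ∃ ε > (0 : ℝ), ∃ ξ > (0 : ℝ), ∀ i,
      (-(Matrix.fromBlocks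
          ((A i)ᵀ * U + U * (A i) + (ε * ζ) • (1 : Matrix (Fin m) (Fin m) ℝ) + ξ • U)
          U U (-(ε • (1 : Matrix (Fin m) (Fin m) ℝ))))).PosSemidef :=
  BMI_feasibility_general U hU Λ hΛ ζ hζ A d hd hA
end
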